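/- arXiv:1301.1652 — 2 statements merged into one kernel-verified Lean document; each statement's English description precedes it below -/
import Mathlib

section
/- For every extension of finite fields F_q ⊆ F_{q^n} there exists an F_q-basis B of F_{q^n} such that each element b ∈ B generates F_{q^n} over F_q, i.e. F_q(b) = F_{q^n} for every b ∈ B. -/
/-!
Take a normal basis `σ ↦ σ b` of `F_{q^n}/F_q`. Its elements are pairwise distinct, so no
nontrivial automorphism fixes any of them; by the Galois correspondence each one generates.
-/

open IntermediateField

section

variable {K L : Type*} [Field K] [Field L] [Algebra K L] [FiniteDimensional K L] [IsGalois K L]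

theorem IsGalois.adjoin_simple_eq_top_of_injective {x : L}
    (hx : Function.Injective fun σ : Gal(L/K) ↦ σ x) : K⟮x⟯ = ⊤ := by
  have hfix : K⟮x⟯.fixingSubgroup = ⊥ :=
    (Subgroup.eq_bot_iff_forall _).2 fun σ hσ ↦
      hx ((mem_fixingSubgroup_iff _ σ).1 hσ x (mem_adjoin_simple_self K x))
  rw [← IsGalois.fixedField_fixingSubgroup K⟮x⟯, eq_top_iff, le_iff_le, fixingSubgroup_top, hfix]

theorem IsGalois.adjoin_normalBasis_eq_top (σ : Gal(L/K)) : K⟮normalBasis K L σ⟯ = ⊤ := by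
  have hmul (τ : Gal(L/K)) : τ (normalBasis K L σ) = normalBasis K L (τ * σ) := by
    rw [normalBasis_apply σ, normalBasis_apply (τ * σ), AlgEquiv.mul_apply]
  refine adjoin_simple_eq_top_of_injective fun τ ρ h ↦ ?_
  exact mul_right_cancel ((normalBasis K L).injective ((hmul τ).symm.trans (h.trans (hmul ρ))))

end

theorem exists_basis_of_generators_general
    (F E : Type*) [Field F] [Field E] [Fintype E] [Algebra F E]
    (n : ℕ) (hn : Module.finrank F E = n) :
    ∃ B : Module.Basis (Fin n) F E, ∀ i : Fin n, IntermediateField.adjoin F {B i} = ⊤ := by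
  have hcard : Nat.card Gal(E/F) = n := hn ▸ IsGalois.card_aut_eq_finrank F E
  refine ⟨(IsGalois.normalBasis F E).reindex (Finite.equivFinOfCardEq hcard), fun i ↦ ?_⟩
  rw [Module.Basis.reindex_apply]
  exact IsGalois.adjoin_normalBasis_eq_top _

/-- For every extension `F_q ⊆ F_{q^n}` of finite fields there is an `F_q`-basis of `F_{q^n}`
each of whose elements generates `F_{q^n}` over `F_q`. -/
theorem exists_basis_of_generators
    (F E : Type*) [Field F] [Fintype F] [Field E] [Fintype E] [Algebra F E]
    (n : ℕ) (hn : Module.finrank F E = n) :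
    ∃ B : Module.Basis (Fin n) F E, ∀ i : Fin n, IntermediateField.adjoin F {B i} = ⊤ :=
  exists_basis_of_generators_general F E n hn
end

section
/- Let p be a prime and n ≥ 0 an integer. For j ∈ {0,…,n} define Ω(j) = { m : 0 ≤ m ≤ n and the binomial coefficient C(m,j) is not divisible by p }, and for J ⊆ {0,…,n} set Ω(J) = ⋃_{j∈J} Ω(j). Then Ω is a closure operator on the subsets of {0,1,…,n}: J ⊆ Ω(J) for all J; Ω is monotone; and Ω(Ω(J)) = Ω(J) for all J. -/
/-- The operator `Ω(J) = ⋃_{j ∈ J} { m ≤ n : p ∤ C(m,j) }` on subsets of `{0, 1, …, n}`,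
arising from the automorphic collineations `xᵢ ↦ aⁱxᵢ` of the normal rational curve
over a field of characteristic `p`. -/
def omegaOp (p : ℕ) {n : ℕ} (J : Set (Fin (n + 1))) : Set (Fin (n + 1)) :=
  {m | ∃ j ∈ J, ¬ p ∣ Nat.choose (m : ℕ) (j : ℕ)}

/-! `Ω(J)` is the upward closure of `J` for the relation `j ≼ m :⇔ p ∤ C(m,j)`, so it suffices
that this relation is a preorder. Transitivity needs no Lucas' theorem: by the identity
`C(k,m) C(m,j) = C(k,j) C(k-j,m-j)`, a prime dividing `C(k,j)` divides `C(k,m)` or `C(m,j)`. -/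

theorem Nat.le_of_not_dvd_choose {p m j : ℕ} (h : ¬ p ∣ m.choose j) : j ≤ m := by
  by_contra hlt
  exact h (by simp [Nat.choose_eq_zero_of_lt (not_le.mp hlt)])

theorem Nat.Prime.not_dvd_choose_trans {p k m j : ℕ} (hp : p.Prime)
    (hkm : ¬ p ∣ k.choose m) (hmj : ¬ p ∣ m.choose j) : ¬ p ∣ k.choose j := by
  intro hkj
  have hprod : p ∣ k.choose m * m.choose j := by
    rw [Nat.choose_mul (Nat.le_of_not_dvd_choose hmj)]
    exact dvd_mul_of_dvd_left hkj _
  exact (hp.dvd_mul.mp hprod).elim hkm hmj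

theorem subset_omegaOp {p n : ℕ} (hp : p ≠ 1) (J : Set (Fin (n + 1))) : J ⊆ omegaOp p J :=
  fun j hj => ⟨j, hj, by simpa [Nat.choose_self] using hp⟩

theorem omegaOp_mono (p n : ℕ) : Monotone (omegaOp p (n := n)) :=
  fun _ _ hJ _ ⟨j, hj, hmj⟩ => ⟨j, hJ hj, hmj⟩

theorem omegaOp_omegaOp {p n : ℕ} (hp : p.Prime) (J : Set (Fin (n + 1))) :
    omegaOp p (omegaOp p J) = omegaOp p J := by
  refine (subset_omegaOp hp.one_lt.ne' _).antisymm' ?_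
  rintro k ⟨m, ⟨j, hj, hmj⟩, hkm⟩
  exact ⟨j, hj, hp.not_dvd_choose_trans hkm hmj⟩

/-- For a prime `p`, `Ω` is a closure operator on the subsets of `{0, 1, …, n}`: it is
extensive, monotone and idempotent (the latter by Lucas' theorem). -/
theorem omegaOp_isClosureOperator (p : ℕ) (hp : p.Prime) (n : ℕ) :
    (∀ J : Set (Fin (n + 1)), J ⊆ omegaOp p J) ∧
      (∀ J J' : Set (Fin (n + 1)), J ⊆ J' → omegaOp p J ⊆ omegaOp p J') ∧
      (∀ J : Set (Fin (n + 1)), omegaOp p (omegaOp p J) = omegaOp p J) :=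
  ⟨subset_omegaOp hp.one_lt.ne', fun _ _ hJ => omegaOp_mono p n hJ, omegaOp_omegaOp hp⟩
end
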